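/- arXiv:2408.05058 — 2 statements merged into one kernel-verified Lean document; each statement's English description precedes it below -/
import Mathlib

section
/- The function f^J defined by reweighting the symmetrized joint Q^J(τ^{1:K}, q^{1:K}, z^{1:K,0:J}) by the ratio (Σ_k w_k^J)/(Σ_k w_k) integrates to one; in fact, integrating out the latent variables z^{1:K,0:J} yields exactly the product variational density Π_{k=1}^K Q_φ(τ^k) Q_ψ(q^k|τ^k). -/
/-!
Write `F_k(z) = Q_ψ^J(q^k|τ^k,z) Π_j Q_ψ(z_j|τ^k) Q_φ(τ^k)` for the `k`-th factor of `Q^J`,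
so that `f^J = (Σ_k w_k^J(z^k)) Π_l F_l(z^l) / Σ_k w_k`. Unbiasedness of the mixture gives
`∫ F_k = Q_φ(τ^k) Q_ψ(q^k|τ^k)`, while `w_k^J F_k = P(Y|τ^k,q^k) P(τ^k,q^k) Π_j Q_ψ(z_j|τ^k)`
no longer involves the mixture, so `∫ w_k^J F_k = w_k ∫ F_k`. Hence, by Fubini, the `k`-th summand
integrates to `w_k Π_l ∫ F_l`; summing over `k` cancels the normaliser `Σ_k w_k`.
-/

open MeasureTheory

namespace VBPIfJ

variable {T : Type*}

/-- The (J+1)-sample mixture estimate `Q_ψ^J(q|τ,z^{0:J})`. -/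
noncomputable def Qmix (dq dz : ℕ) (Qc : T → (Fin dq → ℝ) → (Fin dz → ℝ) → ℝ)
    (J : ℕ) (τ : T) (q : Fin dq → ℝ) (zs : Fin (J + 1) → Fin dz → ℝ) : ℝ :=
  (1 / (J + 1 : ℝ)) * ∑ j, Qc τ q (zs j)

/-- The exact marginal `Q_ψ(q|τ) = ∫ Q_ψ(q|τ,z) Q_ψ(z|τ) dz`. -/
noncomputable def Qmarg (dq dz : ℕ) (Qc : T → (Fin dq → ℝ) → (Fin dz → ℝ) → ℝ)
    (Qz : T → (Fin dz → ℝ) → ℝ) (τ : T) (q : Fin dq → ℝ) : ℝ :=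
  ∫ z, Qc τ q z * Qz τ z

/-- The symmetrized joint density `Q^J(τ^{1:K}, q^{1:K}, z^{1:K,0:J})`. -/
noncomputable def QJdens (dq dz : ℕ) (Qφ : T → ℝ)
    (Qc : T → (Fin dq → ℝ) → (Fin dz → ℝ) → ℝ) (Qz : T → (Fin dz → ℝ) → ℝ)
    (K J : ℕ) (τs : Fin K → T) (qs : Fin K → Fin dq → ℝ)
    (zs : Fin K → Fin (J + 1) → Fin dz → ℝ) : ℝ :=
  ∏ k, Qmix dq dz Qc J (τs k) (qs k) (zs k) * (∏ j, Qz (τs k) (zs k j)) * Qφ (τs k)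

/-- Weight with the exact marginal. -/
noncomputable def wExact (dq dz : ℕ) (Ppost : T → (Fin dq → ℝ) → ℝ) (Qφ : T → ℝ)
    (Qc : T → (Fin dq → ℝ) → (Fin dz → ℝ) → ℝ) (Qz : T → (Fin dz → ℝ) → ℝ)
    (τ : T) (q : Fin dq → ℝ) : ℝ :=
  Ppost τ q / (Qφ τ * Qmarg dq dz Qc Qz τ q)

/-- Weight with the mixture estimate. -/
noncomputable def wMix (dq dz : ℕ) (Ppost : T → (Fin dq → ℝ) → ℝ) (Qφ : T → ℝ)
    (Qc : T → (Fin dq → ℝ) → (Fin dz → ℝ) → ℝ)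
    (J : ℕ) (τ : T) (q : Fin dq → ℝ) (zs : Fin (J + 1) → Fin dz → ℝ) : ℝ :=
  Ppost τ q / (Qφ τ * Qmix dq dz Qc J τ q zs)

/-- The reweighted function `f^J = (Σ_k w_k^J / Σ_k w_k) · Q^J`. -/
noncomputable def fJ (dq dz : ℕ) (Ppost : T → (Fin dq → ℝ) → ℝ) (Qφ : T → ℝ)
    (Qc : T → (Fin dq → ℝ) → (Fin dz → ℝ) → ℝ) (Qz : T → (Fin dz → ℝ) → ℝ)
    (K J : ℕ) (τs : Fin K → T) (qs : Fin K → Fin dq → ℝ)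
    (zs : Fin K → Fin (J + 1) → Fin dz → ℝ) : ℝ :=
  ((∑ k, wMix dq dz Ppost Qφ Qc J (τs k) (qs k) (zs k)) /
      (∑ k, wExact dq dz Ppost Qφ Qc Qz (τs k) (qs k))) *
    QJdens dq dz Qφ Qc Qz K J τs qs zs

end VBPIfJ

section Reweighting

open Finset Function

variable {ι : Type*} [Fintype ι]

theorem Finset.mul_prod_eq_prod_update [DecidableEq ι] {M : Type*} [CommMonoid M] (f : ι → M)
    (k : ι) (a : M) : a * ∏ i, f i = ∏ i, update f k (a * f k) i := by
  rw [prod_update_of_mem (mem_univ k), prod_eq_mul_prod_sdiff_singleton_of_mem (mem_univ k),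
    mul_assoc]

theorem MeasureTheory.integral_sum_mul_prod_pi {𝕜 : Type*} [RCLike 𝕜] {E : ι → Type*}
    {mE : ∀ i, MeasurableSpace (E i)} {μ : ∀ i, Measure (E i)} [∀ i, SigmaFinite (μ i)]
    {F w : ∀ i, E i → 𝕜} {c : ι → 𝕜} (hF : ∀ i, Integrable (F i) (μ i))
    (hwF : ∀ i, Integrable (fun x ↦ w i x * F i x) (μ i))
    (hw : ∀ i, ∫ x, w i x * F i x ∂μ i = c i * ∫ x, F i x ∂μ i) :
    ∫ x, (∑ i, w i (x i)) * ∏ i, F i (x i) ∂Measure.pi μ =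
      (∑ i, c i) * ∏ i, ∫ x, F i x ∂μ i := by
  classical
  set G : ι → ∀ i, E i → 𝕜 := fun k ↦ update F k (fun x ↦ w k x * F k x)
  have hG : ∀ k (x : ∀ i, E i), w k (x k) * ∏ i, F i (x i) = ∏ i, G k i (x i) := fun k x ↦ by
    simp only [G, apply_update (fun i (f : E i → 𝕜) ↦ f (x i))]
    exact mul_prod_eq_prod_update _ k _
  have hGint : ∀ k i, Integrable (G k i) (μ i) := fun k ↦
    forall_update_iff F (p := fun i f ↦ Integrable f (μ i)) |>.2 ⟨hwF k, fun i _ ↦ hF i⟩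
  simp_rw [sum_mul, hG]
  rw [integral_finsetSum _ fun k _ ↦ Integrable.fintype_prod_dep (hGint k)]
  simp_rw [integral_fintype_prod_eq_prod, G, apply_update (fun i (f : E i → 𝕜) ↦ ∫ x, f x ∂μ i),
    hw, ← mul_prod_eq_prod_update]

theorem MeasureTheory.sum_integral_prod_pi_eq_one [DecidableEq ι] {T E : Type*} [Fintype T]
    [MeasurableSpace E] {μ : Measure E} [SigmaFinite μ] {p : T → ℝ} {g : T → E → ℝ}
    (hp : ∑ τ, p τ = 1) (hg : ∀ τ, ∫ x, g τ x ∂μ = 1) :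
    ∑ τs : ι → T, ∫ x, ∏ i, p (τs i) * g (τs i) (x i) ∂Measure.pi (fun _ ↦ μ) = 1 := by
  have hinner : ∀ τs : ι → T, ∫ x, ∏ i, p (τs i) * g (τs i) (x i) ∂Measure.pi (fun _ ↦ μ) =
      ∏ i, p (τs i) := fun τs ↦ by
    rw [integral_fintype_prod_eq_prod (fun i y ↦ p (τs i) * g (τs i) y)]
    simp_rw [integral_const_mul, hg, mul_one]
  simp_rw [hinner, ← Fintype.prod_sum (fun _ ↦ p), hp, prod_const_one]

end Reweighting

namespace VBPIfJ

open Finset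

section LatentIntegral

variable {dq dz : ℕ} {Ppost : T → (Fin dq → ℝ) → ℝ} {Qφ : T → ℝ}
  {Qc : T → (Fin dq → ℝ) → (Fin dz → ℝ) → ℝ} {Qz : T → (Fin dz → ℝ) → ℝ} {J : ℕ}

theorem integral_Qmix_mul_prod_mul {τ : T} {q : Fin dq → ℝ}
    (hunbiased : ∫ zs : Fin (J + 1) → Fin dz → ℝ,
      (∏ j, Qz τ (zs j)) * Qmix dq dz Qc J τ q zs = Qmarg dq dz Qc Qz τ q) :
    ∫ zs : Fin (J + 1) → Fin dz → ℝ, Qmix dq dz Qc J τ q zs * (∏ j, Qz τ (zs j)) * Qφ τ =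
      Qφ τ * Qmarg dq dz Qc Qz τ q := by
  simp_rw [integral_mul_const, mul_comm (Qmix _ _ _ _ _ _ _), hunbiased, mul_comm]

theorem wMix_mul_Qmix_mul_prod_mul {τ : T} {q : Fin dq → ℝ} {zs : Fin (J + 1) → Fin dz → ℝ}
    (hQφ : Qφ τ ≠ 0) (hQmix : Qmix dq dz Qc J τ q zs ≠ 0) :
    wMix dq dz Ppost Qφ Qc J τ q zs * (Qmix dq dz Qc J τ q zs * (∏ j, Qz τ (zs j)) * Qφ τ) =
      Ppost τ q * ∏ j, Qz τ (zs j) := by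
  unfold wMix
  field_simp

theorem integral_fJ {K : ℕ} (hK : 0 < K) (hQφ_pos : ∀ τ, 0 < Qφ τ)
    (hQz_prob : ∀ τ, ∫ z, Qz τ z = 1) (hPpost_pos : ∀ τ q, 0 < Ppost τ q)
    (hQmarg_pos : ∀ τ q, 0 < Qmarg dq dz Qc Qz τ q)
    (hQmix_pos : ∀ τ q zs, 0 < Qmix dq dz Qc J τ q zs)
    (hmix_unbiased : ∀ (τ : T) (q : Fin dq → ℝ),
      ∫ zs : Fin (J + 1) → Fin dz → ℝ, (∏ j, Qz τ (zs j)) * Qmix dq dz Qc J τ q zs =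
        Qmarg dq dz Qc Qz τ q)
    (τs : Fin K → T) (qs : Fin K → Fin dq → ℝ) :
    ∫ zs : Fin K → Fin (J + 1) → Fin dz → ℝ, fJ dq dz Ppost Qφ Qc Qz K J τs qs zs =
      ∏ k, Qφ (τs k) * Qmarg dq dz Qc Qz (τs k) (qs k) := by
  have : Nonempty (Fin K) := ⟨⟨0, hK⟩⟩
  set S := ∑ k, wExact dq dz Ppost Qφ Qc Qz (τs k) (qs k)
  have hS : S ≠ 0 := (sum_pos (fun k _ ↦ div_pos (hPpost_pos _ _)
    (mul_pos (hQφ_pos _) (hQmarg_pos _ _))) univ_nonempty).ne'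
  have hprod_Qz : ∀ τ, ∫ zs : Fin (J + 1) → Fin dz → ℝ, ∏ j, Qz τ (zs j) = 1 := fun τ ↦ by
    rw [integral_fintype_prod_volume_eq_pow, hQz_prob, one_pow]
  have hF : ∀ k, ∫ zs : Fin (J + 1) → Fin dz → ℝ,
      Qmix dq dz Qc J (τs k) (qs k) zs * (∏ j, Qz (τs k) (zs j)) * Qφ (τs k) =
        Qφ (τs k) * Qmarg dq dz Qc Qz (τs k) (qs k) := fun k ↦
    integral_Qmix_mul_prod_mul (hmix_unbiased _ _)
  have hwF : ∀ k, (fun zs ↦ wMix dq dz Ppost Qφ Qc J (τs k) (qs k) zs *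
      (Qmix dq dz Qc J (τs k) (qs k) zs * (∏ j, Qz (τs k) (zs j)) * Qφ (τs k))) =
        fun zs ↦ Ppost (τs k) (qs k) * ∏ j, Qz (τs k) (zs j) := fun k ↦
    funext fun _ ↦ wMix_mul_Qmix_mul_prod_mul (hQφ_pos _).ne' (hQmix_pos _ _ _).ne'
  have key := integral_sum_mul_prod_pi (μ := fun _ ↦ volume)
    (w := fun k ↦ wMix dq dz Ppost Qφ Qc J (τs k) (qs k))
    (c := fun k ↦ wExact dq dz Ppost Qφ Qc Qz (τs k) (qs k))
    (fun k ↦ .of_integral_ne_zero <| by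
      rw [hF k]; exact (mul_pos (hQφ_pos _) (hQmarg_pos _ _)).ne')
    (fun k ↦ by
      rw [hwF k]
      exact (Integrable.of_integral_ne_zero (by simp [hprod_Qz])).const_mul _)
    (fun k ↦ by
      rw [hwF k, integral_const_mul, hprod_Qz, mul_one, hF k, wExact,
        div_mul_cancel₀ _ (mul_pos (hQφ_pos _) (hQmarg_pos _ _)).ne'])
  calc _ = (∫ zs : Fin K → Fin (J + 1) → Fin dz → ℝ,
        (∑ k, wMix dq dz Ppost Qφ Qc J (τs k) (qs k) (zs k)) * ∏ k,
          Qmix dq dz Qc J (τs k) (qs k) (zs k) * (∏ j, Qz (τs k) (zs k j)) * Qφ (τs k)) / S := by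
        simp_rw [fJ, QJdens, div_mul_eq_mul_div]
        exact integral_div _ _
    _ = S * (∏ k, Qφ (τs k) * Qmarg dq dz Qc Qz (τs k) (qs k)) / S := by
        rw [volume_pi, key]
        simp_rw [hF]
        rfl
    _ = _ := mul_div_cancel_left₀ _ hS

end LatentIntegral

theorem fJ_is_probability_density_general [Fintype T] (dq dz : ℕ)
    (Ppost : T → (Fin dq → ℝ) → ℝ) (Qφ : T → ℝ)
    (Qc : T → (Fin dq → ℝ) → (Fin dz → ℝ) → ℝ) (Qz : T → (Fin dz → ℝ) → ℝ)
    (K J : ℕ) (hK : 1 ≤ K)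
    (hQφ_pos : ∀ τ, 0 < Qφ τ) (hQφ_prob : ∑ τ, Qφ τ = 1)
    (hQz_prob : ∀ τ, ∫ z, Qz τ z = 1)
    (hQmarg_prob : ∀ τ, ∫ q, Qmarg dq dz Qc Qz τ q = 1)
    (hPpost_pos : ∀ τ q, 0 < Ppost τ q)
    (hQmarg_pos : ∀ τ q, 0 < Qmarg dq dz Qc Qz τ q)
    (hQmix_pos : ∀ τ q zs, 0 < Qmix dq dz Qc J τ q zs)
    (hmix_unbiased : ∀ (τ : T) (q : Fin dq → ℝ),
      (∫ zs : Fin (J + 1) → Fin dz → ℝ,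
          (∏ j, Qz τ (zs j)) * Qmix dq dz Qc J τ q zs)
        = Qmarg dq dz Qc Qz τ q) :
    (∀ (τs : Fin K → T) (qs : Fin K → Fin dq → ℝ),
      (∫ zs : Fin K → Fin (J + 1) → Fin dz → ℝ,
          fJ dq dz Ppost Qφ Qc Qz K J τs qs zs)
        = ∏ k, Qφ (τs k) * Qmarg dq dz Qc Qz (τs k) (qs k))
    ∧ (∑ τs : Fin K → T, ∫ qs : Fin K → Fin dq → ℝ,
        ∫ zs : Fin K → Fin (J + 1) → Fin dz → ℝ,
          fJ dq dz Ppost Qφ Qc Qz K J τs qs zs) = 1 := by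
  have hz := integral_fJ hK hQφ_pos hQz_prob hPpost_pos hQmarg_pos hQmix_pos hmix_unbiased
  refine ⟨hz, ?_⟩
  simp_rw [hz]
  exact sum_integral_prod_pi_eq_one hQφ_prob hQmarg_prob

/-- Integrating the latent variables out of `f^J` yields the product variational
density, and `f^J` integrates to one overall. -/
theorem fJ_is_probability_density [Fintype T] (dq dz : ℕ)
    (Ppost : T → (Fin dq → ℝ) → ℝ) (Qφ : T → ℝ)
    (Qc : T → (Fin dq → ℝ) → (Fin dz → ℝ) → ℝ) (Qz : T → (Fin dz → ℝ) → ℝ)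
    (K J : ℕ) (hK : 1 ≤ K)
    (hQφ_pos : ∀ τ, 0 < Qφ τ) (hQφ_prob : ∑ τ, Qφ τ = 1)
    (hQz_nonneg : ∀ τ z, 0 ≤ Qz τ z) (hQz_prob : ∀ τ, ∫ z, Qz τ z = 1)
    (hQc_nonneg : ∀ τ q z, 0 ≤ Qc τ q z)
    (hQmarg_prob : ∀ τ, ∫ q, Qmarg dq dz Qc Qz τ q = 1)
    (hPpost_pos : ∀ τ q, 0 < Ppost τ q)
    (hQmarg_pos : ∀ τ q, 0 < Qmarg dq dz Qc Qz τ q)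
    (hQmix_pos : ∀ τ q zs, 0 < Qmix dq dz Qc J τ q zs)
    (hmix_unbiased : ∀ (τ : T) (q : Fin dq → ℝ),
      (∫ zs : Fin (J + 1) → Fin dz → ℝ,
          (∏ j, Qz τ (zs j)) * Qmix dq dz Qc J τ q zs)
        = Qmarg dq dz Qc Qz τ q)
    (hint_z : ∀ (τs : Fin K → T) (qs : Fin K → Fin dq → ℝ),
      Integrable (fun zs : Fin K → Fin (J + 1) → Fin dz → ℝ =>
        fJ dq dz Ppost Qφ Qc Qz K J τs qs zs))
    (hint_q : ∀ τs : Fin K → T,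
      Integrable (fun qs : Fin K → Fin dq → ℝ =>
        ∏ k, Qφ (τs k) * Qmarg dq dz Qc Qz (τs k) (qs k))) :
    (∀ (τs : Fin K → T) (qs : Fin K → Fin dq → ℝ),
      (∫ zs : Fin K → Fin (J + 1) → Fin dz → ℝ,
          fJ dq dz Ppost Qφ Qc Qz K J τs qs zs)
        = ∏ k, Qφ (τs k) * Qmarg dq dz Qc Qz (τs k) (qs k))
    ∧ (∑ τs : Fin K → T, ∫ qs : Fin K → Fin dq → ℝ,
        ∫ zs : Fin K → Fin (J + 1) → Fin dz → ℝ,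
          fJ dq dz Ppost Qφ Qc Qz K J τs qs zs) = 1 :=
  fJ_is_probability_density_general dq dz Ppost Qφ Qc Qz K J hK hQφ_pos hQφ_prob hQz_prob
    hQmarg_prob hPpost_pos hQmarg_pos hQmix_pos hmix_unbiased

end VBPIfJ
end

section
/- For any reverse model R, the single-sample importance weighted lower bound satisfies IWLB_J ≤ IWLB_{J+1} ≤ ELBO for all J ≥ 0, where IWLB_J = E_{Q(x,z^0), z^{1:J} iid R(·|x)} log( P(x,D) / ((1/(J+1)) Σ_{j=0}^J Q(x|z^j)Q(z^j)/R(z^j|x)) ). -/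
/-!
Fix `x`, write `w = Q(x|·) Q(·) / R(·|x)` and `c = P(x, D)`, and let `m_J` be the mean of
`w(z⁰), …, w(z^J)` for `z^{0:J}` i.i.d. from `R(·|x)`. Since
`Q(x|z⁰) Q(z⁰) ∏_{j ≥ 1} R(z^j|x) = w(z⁰) ∏_{j ≥ 0} R(z^j|x)`, the inner integral of `IWLB_J` is
`E[w(z⁰) log (c / m_J)]`, which by exchangeability of the samples equals `E[f(m_J)]` for the
concave function `f(s) = s log (c / s)`. Now `m_{J+1}` is the average of its `J + 2` leave-one-out
means, each distributed as `m_J`, so concavity gives `E f(m_J) ≤ E f(m_{J+1})`; and `E m_J = Q(x)`,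
so Jensen gives `E f(m_J) ≤ f(Q(x))`, the integrand of the ELBO. Integrating over `x` gives both
inequalities.

Measurability of `w` comes from the integrability of the `J = 1` integrand, in which
`log (c / m_1)` is, for a fixed first sample, an invertible function of the second weight.
-/

open MeasureTheory

/-- The single-sample importance weighted lower bound `IWLB_J` with reverse model
`R(·|x)`: `(x,z⁰) ~ Q(x,z⁰)` and `z^{1:J}` i.i.d. from `R(·|x)`. -/
noncomputable def IWLB (d m : ℕ) (Qc : (Fin d → ℝ) → (Fin m → ℝ) → ℝ)
    (Qz : (Fin m → ℝ) → ℝ) (R : (Fin d → ℝ) → (Fin m → ℝ) → ℝ)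
    (P : (Fin d → ℝ) → ℝ) (J : ℕ) : ℝ :=
  ∫ p : ((Fin d → ℝ) × (Fin m → ℝ)) × (Fin J → (Fin m → ℝ)),
    (Qc p.1.1 p.1.2 * Qz p.1.2 * ∏ j, R p.1.1 (p.2 j)) *
      Real.log (P p.1.1 / ((1 / (J + 1 : ℝ)) *
        (Qc p.1.1 p.1.2 * Qz p.1.2 / R p.1.1 p.1.2 +
          ∑ j, Qc p.1.1 (p.2 j) * Qz (p.2 j) / R p.1.1 (p.2 j))))

/-- The exact evidence lower bound for the semi-implicit marginal. -/
noncomputable def semiImplicitELBO (d m : ℕ) (Qc : (Fin d → ℝ) → (Fin m → ℝ) → ℝ)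
    (Qz : (Fin m → ℝ) → ℝ) (P : (Fin d → ℝ) → ℝ) : ℝ :=
  ∫ x, (∫ z, Qc x z * Qz z) * Real.log (P x / ∫ z, Qc x z * Qz z)

open Finset

noncomputable def mulLogDiv (c s : ℝ) : ℝ := s * Real.log (c / s)

lemma mulLogDiv_eq_add_negMulLog {c s : ℝ} (hc : 0 < c) (hs : 0 ≤ s) :
    mulLogDiv c s = s * Real.log c + Real.negMulLog s := by
  rcases hs.eq_or_lt with rfl | hs
  · simp [mulLogDiv]
  · rw [mulLogDiv, Real.negMulLog, Real.log_div hc.ne' hs.ne']; ring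

lemma concaveOn_mulLogDiv {c : ℝ} (hc : 0 < c) : ConcaveOn ℝ (Set.Ici 0) (mulLogDiv c) :=
  ((((LinearMap.lsmul ℝ ℝ).flip (Real.log c)).concaveOn (convex_Ici 0)).add
    Real.concaveOn_negMulLog).congr fun _ hs => (mulLogDiv_eq_add_negMulLog hc hs).symm

lemma continuousOn_mulLogDiv {c : ℝ} (hc : 0 < c) : ContinuousOn (mulLogDiv c) (Set.Ici 0) :=
  ((continuous_id.mul continuous_const).add Real.continuous_negMulLog).continuousOn.congr
    fun _ hs => mulLogDiv_eq_add_negMulLog hc hs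

lemma le_abs_mulLogDiv_add {c s : ℝ} (hc : 0 < c) (hs : 0 ≤ s) :
    s ≤ |mulLogDiv c s| + Real.exp 1 * c := by
  rcases le_or_gt s (Real.exp 1 * c) with hle | hlt
  · linarith [abs_nonneg (mulLogDiv c s)]
  · have hspos : 0 < s := (by positivity : 0 < Real.exp 1 * c).trans hlt
    have hlog : 1 ≤ Real.log (s / c) := by
      rw [Real.le_log_iff_exp_le (by positivity), le_div_iff₀ hc]; exact hlt.le
    have : mulLogDiv c s = -(s * Real.log (s / c)) := by
      rw [mulLogDiv, ← inv_div, Real.log_inv, mul_neg]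
    rw [this, abs_neg, abs_of_nonneg (by positivity)]
    nlinarith [Real.exp_pos 1]

theorem MeasureTheory.MeasurePreserving.integral_comp_of_aestronglyMeasurable {α δ : Type*}
    [MeasurableSpace α] [MeasurableSpace δ] {μ : Measure α} {ν : Measure δ} {f : α → δ}
    (hf : MeasurePreserving f μ ν) {g : δ → ℝ} (hg : AEStronglyMeasurable g ν) :
    ∫ x, g (f x) ∂μ = ∫ y, g y ∂ν := by
  rw [← hf.map_eq] at hg ⊢
  exact (integral_map hf.measurable.aemeasurable hg).symm

theorem MeasureTheory.Measure.pi_withDensity_ofReal {β ι : Type*} [Fintype ι] [MeasurableSpace β]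
    {μ : Measure β} [SigmaFinite μ] {r : β → ℝ} (hr : 0 ≤ r) (hr_int : Integrable r μ) :
    Measure.pi (fun _ : ι => μ.withDensity fun b => ENNReal.ofReal (r b)) =
      (Measure.pi fun _ => μ).withDensity fun z => ENNReal.ofReal (∏ i, r (z i)) := by
  have : IsFiniteMeasure (μ.withDensity fun b => ENNReal.ofReal (r b)) :=
    isFiniteMeasure_withDensity_ofReal hr_int.2
  refine Measure.pi_eq fun s hs => ?_
  have hprod_int : Integrable (fun z : ι → β => ∏ i, r (z i))
      (Measure.pi fun i => μ.restrict (s i)) :=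
    Integrable.fintype_prod fun i => hr_int.restrict
  rw [withDensity_apply _ (MeasurableSet.univ_pi hs), Measure.restrict_pi_pi,
    ← ofReal_integral_eq_lintegral_ofReal hprod_int
      (Filter.Eventually.of_forall fun z => prod_nonneg fun i _ => hr _),
    integral_fintype_prod_eq_prod, ENNReal.ofReal_prod_of_nonneg
      fun i _ => integral_nonneg hr]
  refine prod_congr rfl fun i _ => ?_
  rw [withDensity_apply _ (hs i), ofReal_integral_eq_lintegral_ofReal hr_int.restrict
    (Filter.Eventually.of_forall hr)]

section WithDensity

variable {β : Type*} [MeasurableSpace β] {μ : Measure β} {r : β → ℝ}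

lemma isProbabilityMeasure_withDensity_ofReal (hr : 0 ≤ r) (h : ∫ b, r b ∂μ = 1) :
    IsProbabilityMeasure (μ.withDensity fun b => ENNReal.ofReal (r b)) := by
  refine ⟨?_⟩
  rw [withDensity_apply _ MeasurableSet.univ, Measure.restrict_univ,
    ← ofReal_integral_eq_lintegral_ofReal (.of_integral_ne_zero (by simp [h])) (ae_of_all _ hr),
    h, ENNReal.ofReal_one]

lemma integrable_withDensity_ofReal_iff (hr : 0 ≤ r) (hrm : AEMeasurable r μ) {g : β → ℝ} :
    Integrable g (μ.withDensity fun b => ENNReal.ofReal (r b)) ↔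
      Integrable (fun b => r b * g b) μ := by
  have h := integrable_withDensity_iff_integrable_smul₀ (g := g) hrm.real_toNNReal
  simp only [NNReal.smul_def, smul_eq_mul, fun b => Real.coe_toNNReal _ (hr b)] at h
  exact h

lemma integral_withDensity_ofReal (hr : 0 ≤ r) (hrm : AEMeasurable r μ) (g : β → ℝ) :
    ∫ b, g b ∂(μ.withDensity fun b => ENNReal.ofReal (r b)) = ∫ b, r b * g b ∂μ := by
  have h := integral_withDensity_eq_integral_smul₀ hrm.real_toNNReal g
  simp only [NNReal.smul_def, smul_eq_mul, fun b => Real.coe_toNNReal _ (hr b)] at h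
  exact h

lemma integral_div_withDensity_ofReal (hr : 0 ≤ r) (hrm : AEMeasurable r μ) {u : β → ℝ}
    (hru : ∀ b, r b = 0 → u b = 0) :
    ∫ b, u b / r b ∂(μ.withDensity fun b => ENNReal.ofReal (r b)) = ∫ b, u b ∂μ := by
  rw [integral_withDensity_ofReal hr hrm]
  exact integral_congr_ae (ae_of_all _ fun b => mul_div_cancel_of_imp' (hru b))

theorem integrable_pi_withDensity_ofReal_iff {ι : Type*} [Fintype ι] [SigmaFinite μ] (hr : 0 ≤ r)
    (hr_int : Integrable r μ) {g : (ι → β) → ℝ} :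
    Integrable g (Measure.pi fun _ => μ.withDensity fun b => ENNReal.ofReal (r b)) ↔
      Integrable (fun z => (∏ i, r (z i)) * g z) (Measure.pi fun _ => μ) := by
  rw [Measure.pi_withDensity_ofReal hr hr_int]
  exact integrable_withDensity_ofReal_iff (fun z => prod_nonneg fun i _ => hr (z i))
    (Integrable.fintype_prod fun _ => hr_int).aemeasurable

theorem integral_pi_withDensity_ofReal {ι : Type*} [Fintype ι] [SigmaFinite μ] (hr : 0 ≤ r)
    (hr_int : Integrable r μ) (g : (ι → β) → ℝ) :
    ∫ z, g z ∂(Measure.pi fun _ => μ.withDensity fun b => ENNReal.ofReal (r b)) =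
      ∫ z, (∏ i, r (z i)) * g z ∂(Measure.pi fun _ => μ) := by
  rw [Measure.pi_withDensity_ofReal hr hr_int]
  exact integral_withDensity_ofReal (fun z => prod_nonneg fun i _ => hr (z i))
    (Integrable.fintype_prod fun _ => hr_int).aemeasurable g

end WithDensity

section Sample

variable {β : Type*}

noncomputable def sampleMean (w : β → ℝ) {k : ℕ} (z : Fin k → β) : ℝ := (∑ j, w (z j)) / k

noncomputable def iwIntegrand (w : β → ℝ) (c : ℝ) {n : ℕ} (z : Fin (n + 1) → β) : ℝ :=
  w (z 0) * Real.log (c / sampleMean w z)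

variable {w : β → ℝ}

lemma sampleMean_nonneg (hw : 0 ≤ w) {k : ℕ} (z : Fin k → β) : 0 ≤ sampleMean w z :=
  div_nonneg (sum_nonneg fun _ _ => hw _) k.cast_nonneg

lemma sampleMean_comp_perm {k : ℕ} (z : Fin k → β) (σ : Equiv.Perm (Fin k)) :
    sampleMean w (z ∘ σ) = sampleMean w z := by
  simp only [sampleMean, Function.comp_apply, Equiv.sum_comp σ fun j => w (z j)]

lemma sampleMean_eq_average_removeNth {n : ℕ} (z : Fin (n + 2) → β) :
    sampleMean w z = (∑ i, sampleMean w (Fin.removeNth i z)) / (n + 2) := by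
  have hloo : ∀ i : Fin (n + 2), ∑ j, w (i.removeNth z j) = ∑ j, w (z j) - w (z i) := fun i => by
    rw [← Fin.add_sum_removeNth i fun j => w (z j)]; simp [Fin.removeNth]
  simp only [sampleMean, hloo, ← sum_div, sum_sub_distrib, sum_const, card_univ,
    Fintype.card_fin, nsmul_eq_mul]
  push_cast
  field_simp
  ring_nf

lemma mulLogDiv_sampleMean_eq_average {c : ℝ} {n : ℕ} (z : Fin (n + 1) → β) :
    mulLogDiv c (sampleMean w z) = (∑ i, w (z i) * Real.log (c / sampleMean w z)) / (n + 1) := by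
  rw [mulLogDiv, ← sum_mul]
  nth_rewrite 1 [sampleMean]
  push_cast
  ring

variable [MeasurableSpace β] (ν : Measure β)

lemma measurePreserving_comp_perm [SigmaFinite ν] {ι : Type*} [Fintype ι] (σ : Equiv.Perm ι) :
    MeasurePreserving (fun z : ι → β => z ∘ σ) (Measure.pi fun _ => ν) (Measure.pi fun _ => ν) :=
  measurePreserving_arrowCongr' (fun _ => ν) (fun _ => ν) σ.symm (MeasurableEquiv.refl β)
    fun _ => MeasurePreserving.id ν

lemma measurePreserving_removeNth [IsProbabilityMeasure ν] {n : ℕ} (i : Fin (n + 1)) :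
    MeasurePreserving (Fin.removeNth i : (Fin (n + 1) → β) → Fin n → β)
      (Measure.pi fun _ => ν) (Measure.pi fun _ => ν) :=
  measurePreserving_snd.comp (measurePreserving_piFinSuccAbove (fun _ => ν) i)

end Sample

section Exchangeable

variable {β : Type*} [MeasurableSpace β] {ν : Measure β} [SigmaFinite ν] {w : β → ℝ} {c : ℝ}

theorem integrable_mulLogDiv_sampleMean_and_integral_eq {n : ℕ}
    (h : Integrable (iwIntegrand w c) (Measure.pi fun _ : Fin (n + 1) => ν)) :
    Integrable (fun z => mulLogDiv c (sampleMean w z)) (Measure.pi fun _ : Fin (n + 1) => ν) ∧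
      ∫ z, mulLogDiv c (sampleMean w z) ∂(Measure.pi fun _ : Fin (n + 1) => ν) =
        ∫ z, iwIntegrand w c z ∂(Measure.pi fun _ : Fin (n + 1) => ν) := by
  set f : Fin (n + 1) → (Fin (n + 1) → β) → ℝ := fun i z => w (z i) * Real.log (c / sampleMean w z)
  have hswap : ∀ i, f i = iwIntegrand w c ∘ fun z => z ∘ Equiv.swap 0 i := fun i => by
    ext z
    simp [f, iwIntegrand, sampleMean_comp_perm]
  have hpres := fun i => measurePreserving_comp_perm ν (Equiv.swap (0 : Fin (n + 1)) i)
  have hf_int : ∀ i, Integrable (f i) (Measure.pi fun _ => ν) := fun i => by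
    rw [hswap i]; exact ((hpres i).integrable_comp h.1).mpr h
  have hf_integral : ∀ i, ∫ z, f i z ∂(Measure.pi fun _ => ν) =
      ∫ z, iwIntegrand w c z ∂(Measure.pi fun _ => ν) := fun i => by
    rw [hswap i]; exact (hpres i).integral_comp_of_aestronglyMeasurable h.1
  have hsum : (fun z => mulLogDiv c (sampleMean w z)) = fun z => (∑ i, f i z) / (n + 1) := by
    ext z; exact mulLogDiv_sampleMean_eq_average z
  rw [hsum]
  refine ⟨(integrable_finsetSum _ fun i _ => hf_int i).div_const _, ?_⟩
  rw [integral_div, integral_finsetSum _ fun i _ => hf_int i]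
  simp only [hf_integral, sum_const, card_univ, Fintype.card_fin, nsmul_eq_mul]
  push_cast
  field_simp

end Exchangeable

section Bounds

variable {β : Type*} [MeasurableSpace β] {ν : Measure β} [IsProbabilityMeasure ν] {w : β → ℝ}
  {c : ℝ}

theorem integral_mulLogDiv_sampleMean_le_succ (hc : 0 < c) (hw : 0 ≤ w) {n : ℕ}
    (h : Integrable (fun z => mulLogDiv c (sampleMean w z)) (Measure.pi fun _ : Fin (n + 1) => ν))
    (h' : Integrable (fun z => mulLogDiv c (sampleMean w z))
      (Measure.pi fun _ : Fin (n + 2) => ν)) :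
    ∫ z, mulLogDiv c (sampleMean w z) ∂(Measure.pi fun _ : Fin (n + 1) => ν) ≤
      ∫ z, mulLogDiv c (sampleMean w z) ∂(Measure.pi fun _ : Fin (n + 2) => ν) := by
  have hpres := fun i : Fin (n + 2) => measurePreserving_removeNth ν i
  have hloo_int : ∀ i : Fin (n + 2), Integrable (fun z => mulLogDiv c (sampleMean w
      (Fin.removeNth i z))) (Measure.pi fun _ => ν) := fun i =>
    ((hpres i).integrable_comp h.1).mpr h
  have hpt : ∀ z : Fin (n + 2) → β,
      (∑ i, mulLogDiv c (sampleMean w (Fin.removeNth i z))) / (n + 2) ≤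
        mulLogDiv c (sampleMean w z) := fun z => by
    have hjensen := (concaveOn_mulLogDiv hc).le_map_sum (t := univ) (w := fun _ => ((n : ℝ) + 2)⁻¹)
      (p := fun i => sampleMean w (Fin.removeNth i z)) (fun _ _ => by positivity)
      (by simp; field_simp; ring) (fun _ _ => sampleMean_nonneg hw _)
    simp only [smul_eq_mul, ← mul_sum] at hjensen
    rwa [sampleMean_eq_average_removeNth z, div_eq_inv_mul, div_eq_inv_mul]
  calc ∫ z, mulLogDiv c (sampleMean w z) ∂(Measure.pi fun _ : Fin (n + 1) => ν)
      = ∫ z, (∑ i, mulLogDiv c (sampleMean w (Fin.removeNth i z))) / (n + 2)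
          ∂(Measure.pi fun _ : Fin (n + 2) => ν) := by
        rw [integral_div, integral_finsetSum _ fun i _ => hloo_int i]
        simp only [fun i => (hpres i).integral_comp_of_aestronglyMeasurable h.1, sum_const,
          card_univ, Fintype.card_fin, nsmul_eq_mul]
        push_cast
        field_simp
    _ ≤ _ := integral_mono ((integrable_finsetSum _ fun i _ => hloo_int i).div_const _) h' hpt

theorem integral_mulLogDiv_sampleMean_le (hc : 0 < c) (hw : 0 ≤ w) (hwm : AEMeasurable w ν)
    {n : ℕ}
    (h : Integrable (fun z => mulLogDiv c (sampleMean w z)) (Measure.pi fun _ : Fin (n + 1) => ν)) :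
    ∫ z, mulLogDiv c (sampleMean w z) ∂(Measure.pi fun _ : Fin (n + 1) => ν) ≤
      mulLogDiv c (∫ b, w b ∂ν) := by
  have heval := fun j : Fin (n + 1) => measurePreserving_eval (fun _ => ν) j
  have hw_eval : ∀ j, AEMeasurable (fun z : Fin (n + 1) → β => w (z j)) (Measure.pi fun _ => ν) :=
    fun j => hwm.comp_quasiMeasurePreserving (heval j).quasiMeasurePreserving
  have hmean_int : Integrable (sampleMean w) (Measure.pi fun _ : Fin (n + 1) => ν) := by
    refine (h.abs.add (integrable_const (Real.exp 1 * c))).mono'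
      ((Finset.aemeasurable_fun_sum _ fun j _ => hw_eval j).div_const _).aestronglyMeasurable
      (ae_of_all _ fun z => ?_)
    rw [Real.norm_of_nonneg (sampleMean_nonneg hw z)]
    exact le_abs_mulLogDiv_add hc (sampleMean_nonneg hw z)
  have hw_int : Integrable w ν := by
    refine ((heval 0).integrable_comp hwm.aestronglyMeasurable).mp
      ((hmean_int.const_mul (n + 1)).mono' (hw_eval 0).aestronglyMeasurable
        (ae_of_all _ fun z => ?_))
    rw [Function.comp_apply, Real.norm_of_nonneg (hw _), sampleMean]
    push_cast
    rw [mul_div_cancel₀ _ (by positivity)]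
    exact single_le_sum (f := fun j => w (z j)) (fun j _ => hw _) (mem_univ 0)
  have hmean_integral :
      ∫ z, sampleMean w z ∂(Measure.pi fun _ : Fin (n + 1) => ν) = ∫ b, w b ∂ν := by
    simp only [sampleMean]
    rw [integral_div, integral_finsetSum _ fun j _ => integrable_comp_eval hw_int]
    simp only [fun j => (heval j).integral_comp_of_aestronglyMeasurable hwm.aestronglyMeasurable,
      sum_const, card_univ, Fintype.card_fin, nsmul_eq_mul]
    field_simp
  calc ∫ z, mulLogDiv c (sampleMean w z) ∂(Measure.pi fun _ : Fin (n + 1) => ν)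
      ≤ mulLogDiv c (∫ z, sampleMean w z ∂(Measure.pi fun _ : Fin (n + 1) => ν)) :=
        (concaveOn_mulLogDiv hc).le_map_integral (continuousOn_mulLogDiv hc) isClosed_Ici
          (ae_of_all _ (sampleMean_nonneg hw)) hmean_int h
    _ = mulLogDiv c (∫ b, w b ∂ν) := by rw [hmean_integral]

end Bounds

section Measurability

variable {β : Type*} [MeasurableSpace β] {ν : Measure β} [SigmaFinite ν] {w : β → ℝ} {c : ℝ}

theorem aemeasurable_of_integrable_iwIntegrand (hc : 0 < c) (hw : 0 ≤ w)
    (h : Integrable (iwIntegrand w c) (Measure.pi fun _ : Fin 2 => ν)) : AEMeasurable w ν := by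
  have hprod : Integrable (fun p : β × β => w p.1 * Real.log (c / ((w p.1 + w p.2) / 2)))
      (ν.prod ν) := by
    refine (((measurePreserving_piFinTwo fun _ => ν).symm.integrable_comp h.1).mpr h).congr
      (ae_of_all _ fun p => ?_)
    simp [iwIntegrand, sampleMean]
  by_cases hzero : ∀ᵐ b ∂ν, w b = 0
  · exact aemeasurable_const.congr (hzero.mono fun b hb => hb.symm)
  obtain ⟨a, hwa, hslice⟩ :=
    ((Filter.not_eventually.mp hzero).and_eventually hprod.prod_right_ae).exists
  have hwa : 0 < w a := (hw a).lt_of_ne' hwa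
  have hlog : AEMeasurable (fun b => Real.log (c / ((w a + w b) / 2))) ν :=
    (hslice.aemeasurable.const_mul (w a)⁻¹).congr
      (ae_of_all _ fun b => inv_mul_cancel_left₀ hwa.ne' _)
  refine (((aemeasurable_const (b := 2 * c)).div hlog.exp).sub_const (w a)).congr
    (ae_of_all _ fun b => ?_)
  have hsum : 0 < w a + w b := add_pos_of_pos_of_nonneg hwa (hw b)
  change 2 * c / Real.exp (Real.log (c / ((w a + w b) / 2))) - w a = w b
  rw [Real.exp_log (by positivity)]
  field_simp
  ring

end Measurability

section Reweighting

variable {β : Type*} [MeasureSpace β] [SigmaFinite (volume : Measure β)] {r u : β → ℝ}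

theorem integral_mulLogDiv_sampleMean_eq_integral_prod (hr : 0 ≤ r) (hr_prob : ∫ b, r b = 1)
    (hru : ∀ b, r b = 0 → u b = 0) {c : ℝ} {n : ℕ}
    (h : Integrable fun p : β × (Fin n → β) => (u p.1 * ∏ j, r (p.2 j)) *
      Real.log (c / ((1 / (n + 1 : ℝ)) * (u p.1 / r p.1 + ∑ j, u (p.2 j) / r (p.2 j))))) :
    Integrable (iwIntegrand (fun b => u b / r b) c)
        (Measure.pi fun _ : Fin (n + 1) => volume.withDensity fun b => ENNReal.ofReal (r b)) ∧
      Integrable (fun z => mulLogDiv c (sampleMean (fun b => u b / r b) z))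
        (Measure.pi fun _ : Fin (n + 1) => volume.withDensity fun b => ENNReal.ofReal (r b)) ∧
      ∫ z, mulLogDiv c (sampleMean (fun b => u b / r b) z)
          ∂(Measure.pi fun _ : Fin (n + 1) => volume.withDensity fun b => ENNReal.ofReal (r b)) =
        ∫ p : β × (Fin n → β), (u p.1 * ∏ j, r (p.2 j)) *
          Real.log (c / ((1 / (n + 1 : ℝ)) * (u p.1 / r p.1 + ∑ j, u (p.2 j) / r (p.2 j)))) := by
  have := isProbabilityMeasure_withDensity_ofReal hr hr_prob
  have hr_int : Integrable r := .of_integral_ne_zero (by simp [hr_prob])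
  have hpres := volume_preserving_piFinSuccAbove (fun _ : Fin (n + 1) => β) 0
  set F := fun p : β × (Fin n → β) => (u p.1 * ∏ j, r (p.2 j)) *
    Real.log (c / ((1 / (n + 1 : ℝ)) * (u p.1 / r p.1 + ∑ j, u (p.2 j) / r (p.2 j))))
  have hF : F ∘ MeasurableEquiv.piFinSuccAbove (fun _ => β) 0 =
      fun z => (∏ j, r (z j)) * iwIntegrand (fun b => u b / r b) c z := by
    ext z
    simp only [F, Function.comp_apply, MeasurableEquiv.piFinSuccAbove_apply,
      Fin.insertNthEquiv_zero, Fin.consEquiv_symm_apply, Fin.tail, iwIntegrand, sampleMean,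
      Fin.prod_univ_succ, Fin.sum_univ_succ]
    nth_rewrite 1 [← mul_div_cancel_of_imp' (hru (z 0))]
    push_cast
    ring_nf
  have hiw : Integrable (iwIntegrand (fun b => u b / r b) c)
      (Measure.pi fun _ : Fin (n + 1) => volume.withDensity fun b => ENNReal.ofReal (r b)) := by
    rw [integrable_pi_withDensity_ofReal_iff hr hr_int, ← hF]
    exact (hpres.integrable_comp_emb (MeasurableEquiv.measurableEmbedding _)).mpr h
  obtain ⟨hG, hG_eq⟩ := integrable_mulLogDiv_sampleMean_and_integral_eq hiw
  refine ⟨hiw, hG, hG_eq.trans ?_⟩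
  rw [integral_pi_withDensity_ofReal hr hr_int, ← hpres.integral_comp']
  exact integral_congr_ae (ae_of_all _ fun z => (congrFun hF z).symm)

end Reweighting

section Model

variable {α β : Type*} [MeasureSpace β]

noncomputable def reverseMeasure (R : α → β → ℝ) (x : α) : Measure β :=
  volume.withDensity fun z => ENNReal.ofReal (R x z)

-- Where `R x z = 0` this is the junk value `0`, harmless as `Q(x|z) Q(z) = 0` there.
noncomputable def importanceWeight (Qc : α → β → ℝ) (Qz : β → ℝ) (R : α → β → ℝ) (x : α)
    (z : β) : ℝ :=
  Qc x z * Qz z / R x z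

end Model

theorem IWLB_eq_integral_mulLogDiv_sampleMean {d m : ℕ} {Qc : (Fin d → ℝ) → (Fin m → ℝ) → ℝ}
    {Qz : (Fin m → ℝ) → ℝ} {R : (Fin d → ℝ) → (Fin m → ℝ) → ℝ} {P : (Fin d → ℝ) → ℝ}
    (hR_nonneg : ∀ x z, 0 ≤ R x z) (hR_prob : ∀ x, ∫ z, R x z = 1)
    (hR_zero : ∀ x z, R x z = 0 → Qc x z * Qz z = 0) (J : ℕ)
    (hint : Integrable fun p : ((Fin d → ℝ) × (Fin m → ℝ)) × (Fin J → (Fin m → ℝ)) =>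
        (Qc p.1.1 p.1.2 * Qz p.1.2 * ∏ j, R p.1.1 (p.2 j)) *
          Real.log (P p.1.1 / ((1 / (J + 1 : ℝ)) *
            (Qc p.1.1 p.1.2 * Qz p.1.2 / R p.1.1 p.1.2 +
              ∑ j, Qc p.1.1 (p.2 j) * Qz (p.2 j) / R p.1.1 (p.2 j))))) :
    (∀ᵐ x, Integrable (iwIntegrand (importanceWeight Qc Qz R x) (P x))
        (Measure.pi fun _ : Fin (J + 1) => reverseMeasure R x) ∧
      Integrable (fun z => mulLogDiv (P x) (sampleMean (importanceWeight Qc Qz R x) z))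
        (Measure.pi fun _ : Fin (J + 1) => reverseMeasure R x)) ∧
    Integrable (fun x => ∫ z, mulLogDiv (P x) (sampleMean (importanceWeight Qc Qz R x) z)
        ∂(Measure.pi fun _ : Fin (J + 1) => reverseMeasure R x)) ∧
    IWLB d m Qc Qz R P J = ∫ x, ∫ z, mulLogDiv (P x) (sampleMean (importanceWeight Qc Qz R x) z)
        ∂(Measure.pi fun _ : Fin (J + 1) => reverseMeasure R x) := by
  have hassoc := (measurePreserving_prodAssoc (volume : Measure (Fin d → ℝ))
    (volume : Measure (Fin m → ℝ)) (volume : Measure (Fin J → Fin m → ℝ))).symm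
  have hint' := (hassoc.integrable_comp_emb (MeasurableEquiv.measurableEmbedding _)).mpr hint
  have hslice := hint'.prod_right_ae.mono fun x hx =>
    integral_mulLogDiv_sampleMean_eq_integral_prod (hR_nonneg x) (hR_prob x) (hR_zero x)
      (c := P x) (n := J) hx
  refine ⟨hslice.mono fun x hx => ⟨hx.1, hx.2.1⟩, ?_, ?_⟩
  · exact hint'.integral_prod_left.congr (hslice.mono fun x hx => hx.2.2.symm)
  · refine (hassoc.integral_comp' _).symm.trans ((integral_prod _ hint').trans ?_)
    exact integral_congr_ae (hslice.mono fun x hx => hx.2.2.symm)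

theorem iwlb_monotone_le_elbo_general (d m : ℕ)
    (Qc : (Fin d → ℝ) → (Fin m → ℝ) → ℝ) (Qz : (Fin m → ℝ) → ℝ)
    (R : (Fin d → ℝ) → (Fin m → ℝ) → ℝ) (P : (Fin d → ℝ) → ℝ)
    (hQc_nonneg : ∀ x z, 0 ≤ Qc x z) (hQz_nonneg : ∀ z, 0 ≤ Qz z)
    (hR_nonneg : ∀ x z, 0 ≤ R x z) (hR_prob : ∀ x, ∫ z, R x z = 1)
    (hR_dom : ∀ x z, 0 < Qc x z * Qz z → 0 < R x z)
    (hP_pos : ∀ x, 0 < P x)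
    (hint : ∀ J : ℕ,
      Integrable (fun p : ((Fin d → ℝ) × (Fin m → ℝ)) × (Fin J → (Fin m → ℝ)) =>
        (Qc p.1.1 p.1.2 * Qz p.1.2 * ∏ j, R p.1.1 (p.2 j)) *
          Real.log (P p.1.1 / ((1 / (J + 1 : ℝ)) *
            (Qc p.1.1 p.1.2 * Qz p.1.2 / R p.1.1 p.1.2 +
              ∑ j, Qc p.1.1 (p.2 j) * Qz (p.2 j) / R p.1.1 (p.2 j))))))
    (hint_elbo : Integrable (fun x =>
      (∫ z, Qc x z * Qz z) * Real.log (P x / ∫ z, Qc x z * Qz z))) :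
    ∀ J : ℕ, IWLB d m Qc Qz R P J ≤ IWLB d m Qc Qz R P (J + 1)
      ∧ IWLB d m Qc Qz R P J ≤ semiImplicitELBO d m Qc Qz P := by
  have hu : ∀ x z, 0 ≤ Qc x z * Qz z := fun x z => mul_nonneg (hQc_nonneg x z) (hQz_nonneg z)
  have hR_zero : ∀ x z, R x z = 0 → Qc x z * Qz z = 0 := fun x z hR =>
    (hu x z).eq_or_lt.elim Eq.symm fun hpos => absurd hR (hR_dom x z hpos).ne'
  have hR_int : ∀ x, Integrable (R x) := fun x => .of_integral_ne_zero (by simp [hR_prob x])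
  have hw : ∀ x, 0 ≤ importanceWeight Qc Qz R x := fun x z => div_nonneg (hu x z) (hR_nonneg x z)
  have hν : ∀ x, IsProbabilityMeasure (reverseMeasure R x) := fun x =>
    isProbabilityMeasure_withDensity_ofReal (hR_nonneg x) (hR_prob x)
  have key := fun J => IWLB_eq_integral_mulLogDiv_sampleMean hR_nonneg hR_prob hR_zero J (hint J)
  have hw_meas : ∀ᵐ x, AEMeasurable (importanceWeight Qc Qz R x) (reverseMeasure R x) :=
    (key 1).1.mono fun x hx => aemeasurable_of_integrable_iwIntegrand (hP_pos x) (hw x) hx.1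
  intro J
  obtain ⟨hJ_ae, hJ_int, hJ⟩ := key J
  obtain ⟨hJ1_ae, hJ1_int, hJ1⟩ := key (J + 1)
  refine ⟨?_, ?_⟩
  · rw [hJ, hJ1]
    refine integral_mono_ae hJ_int hJ1_int (hJ_ae.and hJ1_ae |>.mono fun x hx => ?_)
    exact integral_mulLogDiv_sampleMean_le_succ (hP_pos x) (hw x) hx.1.2 hx.2.2
  · rw [hJ, semiImplicitELBO]
    refine integral_mono_ae hJ_int hint_elbo (hJ_ae.and hw_meas |>.mono fun x hx => ?_)
    exact (integral_mulLogDiv_sampleMean_le (hP_pos x) (hw x) hx.2 hx.1.2).trans_eq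
      (congrArg (mulLogDiv (P x))
        (integral_div_withDensity_ofReal (hR_nonneg x) (hR_int x).aemeasurable (hR_zero x)))

/-- For any reverse model `R`, `IWLB_J ≤ IWLB_{J+1} ≤ ELBO` for all `J ≥ 0`. -/
theorem iwlb_monotone_le_elbo (d m : ℕ)
    (Qc : (Fin d → ℝ) → (Fin m → ℝ) → ℝ) (Qz : (Fin m → ℝ) → ℝ)
    (R : (Fin d → ℝ) → (Fin m → ℝ) → ℝ) (P : (Fin d → ℝ) → ℝ)
    (hQc_nonneg : ∀ x z, 0 ≤ Qc x z) (hQz_nonneg : ∀ z, 0 ≤ Qz z)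
    (hQz_prob : ∫ z, Qz z = 1) (hQc_prob : ∀ z, ∫ x, Qc x z = 1)
    (hR_nonneg : ∀ x z, 0 ≤ R x z) (hR_prob : ∀ x, ∫ z, R x z = 1)
    (hR_dom : ∀ x z, 0 < Qc x z * Qz z → 0 < R x z)
    (hP_pos : ∀ x, 0 < P x)
    (hint : ∀ J : ℕ,
      Integrable (fun p : ((Fin d → ℝ) × (Fin m → ℝ)) × (Fin J → (Fin m → ℝ)) =>
        (Qc p.1.1 p.1.2 * Qz p.1.2 * ∏ j, R p.1.1 (p.2 j)) *
          Real.log (P p.1.1 / ((1 / (J + 1 : ℝ)) *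
            (Qc p.1.1 p.1.2 * Qz p.1.2 / R p.1.1 p.1.2 +
              ∑ j, Qc p.1.1 (p.2 j) * Qz (p.2 j) / R p.1.1 (p.2 j))))))
    (hint_elbo : Integrable (fun x =>
      (∫ z, Qc x z * Qz z) * Real.log (P x / ∫ z, Qc x z * Qz z))) :
    ∀ J : ℕ, IWLB d m Qc Qz R P J ≤ IWLB d m Qc Qz R P (J + 1)
      ∧ IWLB d m Qc Qz R P J ≤ semiImplicitELBO d m Qc Qz P :=
  iwlb_monotone_le_elbo_general d m Qc Qz R P hQc_nonneg hQz_nonneg hR_nonneg hR_prob hR_dom hP_pos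
    hint hint_elbo
end
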